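/- arXiv:2603.10397 — 6 statements merged into one kernel-verified Lean document; each statement's English description precedes it below -/
import Mathlib

section
/- Let m ≥ 2 be an integer with 8·log m ≤ m (natural logarithm), and let X_1, …, X_m, Y_1, …, Y_m be 2m independent real random variables, each with the standard Gaussian distribution N(0,1). Then P[ |Σ_{i=1}^m X_i·Y_i| ≥ √(8·m·log m) ] ≤ 2/m. -/
/-!
Chernoff bound. If `X, Y` are independent standard Gaussians, integrating out `Y` first gives
`E[exp(t X Y)] = E[exp(t² X² / 2)] = (1 - t²)^(-1/2)` for `t² < 1`, and the `m` pairs `(Xᵢ, Yᵢ)`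
are independent, so `S = ∑ Xᵢ Yᵢ` has `E[exp(± t S)] = (1 - t²)^(-m/2) ≤ exp(m t²)` once
`t² ≤ 1/2`. For `a = √(8 m log m)` and `t = a / (2m)` we get `t² = 2 log m / m ≤ 1/4` and
`t a = 4 log m`, so each tail has probability at most `exp(-4 log m + 2 log m) ≤ 1/m`.
-/

open MeasureTheory ProbabilityTheory Real

lemma integral_exp_mul_sq_gaussianReal {c : ℝ} (hc : c < 1 / 2) :
    ∫ x, exp (c * x ^ 2) ∂gaussianReal 0 1 = (√(1 - 2 * c))⁻¹ := by
  have hdensity : ∀ x : ℝ, gaussianPDFReal 0 1 x • exp (c * x ^ 2)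
      = (√(2 * π))⁻¹ * exp (-(1 / 2 - c) * x ^ 2) := fun x ↦ by
    rw [gaussianPDFReal, smul_eq_mul, mul_assoc, ← exp_add]
    push_cast; ring_nf
  have h2c : 0 < 1 - 2 * c := by linarith
  rw [integral_gaussianReal_eq_integral_smul one_ne_zero]
  simp_rw [hdensity]
  rw [integral_const_mul, integral_gaussian,
    show π / (1 / 2 - c) = 2 * π / (1 - 2 * c) by field_simp, sqrt_div' _ h2c.le]
  field_simp

lemma integrable_exp_mul_sq_gaussianReal {c : ℝ} (hc : c < 1 / 2) :
    Integrable (fun x ↦ exp (c * x ^ 2)) (gaussianReal 0 1) :=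
  .of_integral_ne_zero <| by
    rw [integral_exp_mul_sq_gaussianReal hc]
    exact (inv_pos.mpr (sqrt_pos.mpr (by linarith))).ne'

lemma integral_exp_mul_mul_gaussianReal (t x : ℝ) :
    ∫ y, exp (t * (x * y)) ∂gaussianReal 0 1 = exp (t ^ 2 / 2 * x ^ 2) := by
  have h := congrFun (mgf_fun_id_gaussianReal (μ := 0) (v := 1)) (t * x)
  simp only [mgf] at h
  simp_rw [← mul_assoc, h]
  congr 1; push_cast; ring

lemma integrable_exp_mul_mul_gaussianReal (t x : ℝ) :
    Integrable (fun y ↦ exp (t * (x * y))) (gaussianReal 0 1) := by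
  simp_rw [← mul_assoc]
  exact integrable_exp_mul_gaussianReal _

lemma integrable_exp_mul_mul_gaussianReal_prod {t : ℝ} (ht : t ^ 2 < 1) :
    Integrable (fun p : ℝ × ℝ ↦ exp (t * (p.1 * p.2)))
      ((gaussianReal 0 1).prod (gaussianReal 0 1)) := by
  refine (integrable_prod_iff (by fun_prop)).mpr
    ⟨.of_forall fun x ↦ integrable_exp_mul_mul_gaussianReal t x, ?_⟩
  simp_rw [Real.norm_eq_abs, abs_exp, integral_exp_mul_mul_gaussianReal]
  exact integrable_exp_mul_sq_gaussianReal (by linarith)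

lemma integral_exp_mul_mul_gaussianReal_prod {t : ℝ} (ht : t ^ 2 < 1) :
    ∫ p : ℝ × ℝ, exp (t * (p.1 * p.2)) ∂(gaussianReal 0 1).prod (gaussianReal 0 1)
      = (√(1 - t ^ 2))⁻¹ := by
  rw [integral_prod _ (integrable_exp_mul_mul_gaussianReal_prod ht)]
  simp_rw [integral_exp_mul_mul_gaussianReal]
  rw [integral_exp_mul_sq_gaussianReal (by linarith)]
  ring_nf

lemma inv_sqrt_one_sub_le_exp {u : ℝ} (hu₀ : 0 ≤ u) (hu : u ≤ 1 / 2) : (√(1 - u))⁻¹ ≤ exp u := by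
  have h1u : 0 < 1 - u := by linarith
  have hinv : (1 - u)⁻¹ ≤ exp (2 * u) := calc
    (1 - u)⁻¹ = 1 + u / (1 - u) := by field_simp; ring
    _ ≤ 2 * u + 1 := by
      rw [add_comm, add_le_add_iff_right, div_le_iff₀ h1u]; nlinarith
    _ ≤ exp (2 * u) := add_one_le_exp _
  calc (√(1 - u))⁻¹ = √((1 - u)⁻¹) := (sqrt_inv _).symm
    _ ≤ √(exp (2 * u)) := sqrt_le_sqrt hinv
    _ = exp u := by rw [sqrt_eq_iff_mul_self_eq_of_pos (exp_pos _), ← exp_add, two_mul]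

section

variable {Ω : Type*} [MeasurableSpace Ω] {μ : Measure Ω}

lemma measureReal_abs_ge_le_exp_mul_mgf [IsFiniteMeasure μ] {S : Ω → ℝ} {t : ℝ} (a : ℝ)
    (ht : 0 ≤ t) (hpos : Integrable (fun ω ↦ exp (t * S ω)) μ)
    (hneg : Integrable (fun ω ↦ exp (-t * S ω)) μ) :
    μ.real {ω | a ≤ |S ω|} ≤ exp (-t * a) * (mgf S μ t + mgf S μ (-t)) := by
  have hsplit : {ω | a ≤ |S ω|} ⊆ {ω | a ≤ S ω} ∪ {ω | S ω ≤ -a} := fun ω (hω : a ≤ |S ω|) ↦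
    (le_abs'.mp hω).symm
  have hlower := measure_le_le_exp_mul_mgf (-a) (neg_nonpos.mpr ht) hneg
  rw [neg_mul_neg] at hlower
  calc μ.real {ω | a ≤ |S ω|} ≤ μ.real {ω | a ≤ S ω} + μ.real {ω | S ω ≤ -a} :=
        (measureReal_mono hsplit).trans (measureReal_union_le _ _)
    _ ≤ _ := by rw [mul_add]; exact add_le_add (measure_ge_le_exp_mul_mgf a ht hpos) hlower

lemma ProbabilityTheory.iIndepFun.prodMk_of_sumElim {ι β : Type*} [MeasurableSpace β] [Fintype ι]
    {f g : ι → Ω → β}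
    (hf : ∀ i, Measurable (f i)) (hg : ∀ i, Measurable (g i))
    (h : iIndepFun (Sum.elim f g) μ) :
    iIndepFun (fun i ω ↦ (f i ω, g i ω)) μ := by
  have := h.isProbabilityMeasure
  have := fun i ↦ Measure.isProbabilityMeasure_map (μ := μ) (hf i).aemeasurable
  have := fun i ↦ Measure.isProbabilityMeasure_map (μ := μ) (hg i).aemeasurable
  have hfg : ∀ j, Measurable (Sum.elim f g j) := fun j ↦ j.rec hf hg
  have hpair : ∀ i, μ.map (fun ω ↦ (f i ω, g i ω)) = (μ.map (f i)).prod (μ.map (g i)) := fun i ↦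
    (indepFun_iff_map_prod_eq_prod_map_map (hf i).aemeasurable (hg i).aemeasurable).mp
      (h.indepFun Sum.inl_ne_inr)
  have hregroup : (fun ω i ↦ (f i ω, g i ω)) =
      (MeasurableEquiv.arrowProdEquivProdArrow β β ι).symm ∘
        MeasurableEquiv.sumPiEquivProdPi (fun _ ↦ β) ∘ fun ω j ↦ Sum.elim f g j ω := rfl
  rw [iIndepFun_iff_map_fun_eq_pi_map fun i ↦ ((hf i).prodMk (hg i)).aemeasurable, hregroup,
    ← Measure.map_map (MeasurableEquiv.measurable _)
      ((MeasurableEquiv.measurable _).comp (measurable_pi_lambda _ hfg)),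
    ← Measure.map_map (MeasurableEquiv.measurable _) (measurable_pi_lambda _ hfg),
    h.map_fun_eq_pi_map fun j ↦ (hfg j).aemeasurable,
    (measurePreserving_sumPiEquivProdPi _).map_eq,
    ((measurePreserving_arrowProdEquivProdArrow β β ι _ _).symm _).map_eq]
  simp_rw [hpair]
  rfl

lemma mgf_mul_of_indepFun_gaussianReal [IsFiniteMeasure μ] {X Y : Ω → ℝ} (hX : Measurable X)
    (hY : Measurable Y) (hXY : IndepFun X Y μ) (hlawX : μ.map X = gaussianReal 0 1)
    (hlawY : μ.map Y = gaussianReal 0 1) {t : ℝ} (ht : t ^ 2 < 1) :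
    mgf (X * Y) μ t = (√(1 - t ^ 2))⁻¹ := by
  have hlaw : μ.map (fun ω ↦ (X ω, Y ω)) = (gaussianReal 0 1).prod (gaussianReal 0 1) := by
    rw [(indepFun_iff_map_prod_eq_prod_map_map hX.aemeasurable hY.aemeasurable).mp hXY, hlawX,
      hlawY]
  rw [← integral_exp_mul_mul_gaussianReal_prod ht, ← hlaw,
    integral_map (hX.prodMk hY).aemeasurable (by fun_prop)]
  rfl

lemma mgf_sum_mul_of_iIndepFun_gaussianReal {ι : Type*} [Fintype ι] {X Y : ι → Ω → ℝ}
    (hX : ∀ i, Measurable (X i)) (hY : ∀ i, Measurable (Y i))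
    (hindep : iIndepFun (Sum.elim X Y) μ)
    (hlawX : ∀ i, μ.map (X i) = gaussianReal 0 1) (hlawY : ∀ i, μ.map (Y i) = gaussianReal 0 1)
    {t : ℝ} (ht : t ^ 2 < 1) :
    mgf (∑ i, X i * Y i) μ t = (√(1 - t ^ 2))⁻¹ ^ Fintype.card ι := by
  have := hindep.isProbabilityMeasure
  have hprod : iIndepFun (fun i ↦ X i * Y i) μ :=
    (hindep.prodMk_of_sumElim hX hY).comp (fun _ p ↦ p.1 * p.2) fun _ ↦ by fun_prop
  rw [hprod.mgf_sum (fun i ↦ (hX i).mul (hY i)), Finset.prod_congr rfl fun i _ ↦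
    mgf_mul_of_indepFun_gaussianReal (hX i) (hY i) (hindep.indepFun Sum.inl_ne_inr)
      (hlawX i) (hlawY i) ht]
  simp

lemma measureReal_abs_sum_mul_ge_le_of_gaussianReal {ι : Type*} [Fintype ι]
    {X Y : ι → Ω → ℝ} (hX : ∀ i, Measurable (X i)) (hY : ∀ i, Measurable (Y i))
    (hindep : iIndepFun (Sum.elim X Y) μ)
    (hlawX : ∀ i, μ.map (X i) = gaussianReal 0 1) (hlawY : ∀ i, μ.map (Y i) = gaussianReal 0 1)
    {t : ℝ} (ht₀ : 0 ≤ t) (ht : t ^ 2 < 1) (a : ℝ) :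
    μ.real {ω | a ≤ |∑ i, X i ω * Y i ω|}
      ≤ 2 * (exp (-t * a) * (√(1 - t ^ 2))⁻¹ ^ Fintype.card ι) := by
  have := hindep.isProbabilityMeasure
  have hmgf : ∀ s, s ^ 2 = t ^ 2 →
      mgf (∑ i, X i * Y i) μ s = (√(1 - t ^ 2))⁻¹ ^ Fintype.card ι := fun s hs ↦ by
    rw [mgf_sum_mul_of_iIndepFun_gaussianReal hX hY hindep hlawX hlawY (hs ▸ ht), hs]
  have hint : ∀ s, s ^ 2 = t ^ 2 → Integrable (fun ω ↦ exp (s * (∑ i, X i * Y i) ω)) μ :=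
    fun s hs ↦ mgf_pos_iff.mp <| by
      rw [hmgf s hs]
      exact pow_pos (inv_pos.mpr (sqrt_pos.mpr (by linarith))) _
  have h := measureReal_abs_ge_le_exp_mul_mgf a ht₀ (hint t rfl) (hint (-t) (neg_sq t))
  simp only [Finset.sum_apply, Pi.mul_apply, hmgf t rfl, hmgf (-t) (neg_sq t)] at h
  linarith

end

/-- If `m ≥ 2` with `8·log m ≤ m` and `X_1,…,X_m,Y_1,…,Y_m` are `2m` mutually independent
standard Gaussian `N(0,1)` random variables, then
`P[|Σ_i X_i·Y_i| ≥ √(8·m·log m)] ≤ 2/m`. -/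
theorem stmt_4 {Ω : Type*} [MeasurableSpace Ω] (μ : Measure Ω) [IsProbabilityMeasure μ]
    (m : ℕ) (hm : 2 ≤ m) (hlog : 8 * Real.log m ≤ m)
    (X Y : Fin m → Ω → ℝ)
    (hX : ∀ i, Measurable (X i)) (hY : ∀ i, Measurable (Y i))
    (hindep : iIndepFun
      (Sum.elim X Y) μ)
    (hlawX : ∀ i, Measure.map (X i) μ = gaussianReal 0 1)
    (hlawY : ∀ i, Measure.map (Y i) μ = gaussianReal 0 1) :
    μ {ω | Real.sqrt (8 * m * Real.log m) ≤ |∑ i, X i ω * Y i ω|}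
      ≤ ENNReal.ofReal (2 / m) := by
  have hm1 : (1 : ℝ) < m := by exact_mod_cast hm
  have hlogm : 0 < log m := log_pos hm1
  set a := √(8 * m * log m)
  set t := a / (2 * m)
  have ha2 : a ^ 2 = 8 * m * log m := sq_sqrt (by positivity)
  have ht2 : t ^ 2 = 2 * log m / m := by rw [div_pow, ha2]; field_simp; ring
  have hta : t * a = 4 * log m := by rw [div_mul_eq_mul_div, ← sq, ha2]; field_simp; ring
  have ht2_le : t ^ 2 ≤ 1 / 2 := by rw [ht2, div_le_iff₀ (by positivity)]; linarith
  have hbound : exp (-t * a) * (√(1 - t ^ 2))⁻¹ ^ m ≤ 1 / m := calc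
    _ ≤ exp (-t * a) * exp (t ^ 2) ^ m := by
      gcongr; exact inv_sqrt_one_sub_le_exp (sq_nonneg t) ht2_le
    _ = exp (-(2 * log m)) := by
      rw [← exp_nat_mul, ← exp_add, neg_mul, hta, ht2]; congr 1; field_simp; ring
    _ ≤ exp (-log m) := by gcongr; linarith
    _ = 1 / m := by rw [exp_neg, exp_log (by linarith), one_div]
  have htail := measureReal_abs_sum_mul_ge_le_of_gaussianReal hX hY hindep hlawX hlawY
    (t := t) (by positivity) (by linarith) a
  rw [Fintype.card_fin] at htail
  rw [ENNReal.le_ofReal_iff_toReal_le (measure_ne_top _ _) (by positivity), ← measureReal_def]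
  exact htail.trans (by rw [← mul_one_div]; gcongr)
end

section
/- Let d ≥ 1, let η be a real number, and let w : ℕ → ℝ^d, a : ℕ → ℝ, x : ℕ → ℝ^d, g : ℕ → ℝ be sequences satisfying, for every t ∈ ℕ, the coupled update rules w(t+1) = w(t) − η·a(t)·g(t)·x(t) and a(t+1) = a(t) − η·g(t)·⟨x(t), w(t)⟩. Then for every T ∈ ℕ, ‖w(T)‖² = ‖w(0)‖² − Σ_{j=0}^{T−1} η²·g(j)²·( ⟨x(j), w(j)⟩² − a(j)²·‖x(j)‖² ) − a(0)² + a(T)². -/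
open scoped RealInnerProductSpace

/-- For the coupled updates `w(t+1) = w(t) − η·a(t)·g(t)·x(t)` and
`a(t+1) = a(t) − η·g(t)·⟨x(t), w(t)⟩` in `ℝ^d`, for every `T`:
`‖w(T)‖² = ‖w(0)‖² − Σ_{j<T} η²·g(j)²·(⟨x(j),w(j)⟩² − a(j)²·‖x(j)‖²) − a(0)² + a(T)²`. -/
theorem stmt_6 (d : ℕ) (hd : 1 ≤ d) (η : ℝ)
    (w x : ℕ → EuclideanSpace ℝ (Fin d)) (a g : ℕ → ℝ)
    (hw : ∀ t, w (t + 1) = w t - (η * a t * g t) • x t)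
    (ha : ∀ t, a (t + 1) = a t - η * g t * ⟪x t, w t⟫) :
    ∀ T : ℕ, ‖w T‖ ^ 2 = ‖w 0‖ ^ 2
      - ∑ j ∈ Finset.range T, η ^ 2 * g j ^ 2 * (⟪x j, w j⟫ ^ 2 - a j ^ 2 * ‖x j‖ ^ 2)
      - a 0 ^ 2 + a T ^ 2 := by
  intro T
  induction T with
  | zero => simp
  | succ t ih =>
    have hnorm : ‖w (t + 1)‖ ^ 2
        = ‖w t‖ ^ 2 - 2 * (η * a t * g t) * ⟪x t, w t⟫
          + (η * a t * g t) ^ 2 * ‖x t‖ ^ 2 := by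
      rw [hw t, @norm_sub_sq_real, real_inner_smul_right, norm_smul,
        Real.norm_eq_abs, mul_pow, sq_abs, real_inner_comm (w t)]
      ring
    have hasq : a (t + 1) ^ 2
        = a t ^ 2 - 2 * (η * g t * ⟪x t, w t⟫) * a t
          + (η * g t * ⟪x t, w t⟫) ^ 2 := by
      rw [ha t]; ring
    rw [Finset.sum_range_succ, hnorm, ih, hasq]
    ring
end

section
/- Let d ≥ 3 be an integer and let x be a random vector in ℝ^d whose d coordinates are independent standard Gaussian N(0,1) random variables. Then for every nonzero w ∈ ℝ^d and every real number a, P[ ⟨x, w⟩² < a²·‖x‖² ] ≤ (2√d/√π) · |a| / ‖w‖. -/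
open MeasureTheory ProbabilityTheory Real Set
open scoped ENNReal NNReal InnerProductSpace

/-!
Rotation invariance of the standard Gaussian lets us take `w / ‖w‖` as the first vector of an
orthonormal basis. With `t = |a| / ‖w‖` the event becomes `y₀² < t² ‖y‖²` for i.i.d. standard
Gaussian coordinates `y`, that is `y₀² < c S` with `c = t² / (1 - t²)` and `S` the squared norm of
the other `d - 1` coordinates. Given those, `y₀` lies in an interval of length `2 √(c S)`, which
has Gaussian mass at most `2 √(c S) / √(2π)`; averaging with `𝔼 √S ≤ √(𝔼 S) = √(d - 1)` gives the
bound. This needs `d t² < 1`; otherwise the claimed bound is at least `1`.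
-/

lemma lintegral_le_rpow_lintegral_sq {α : Type*} [MeasurableSpace α] {μ : Measure α}
    [IsProbabilityMeasure μ] {f : α → ℝ≥0∞} (hf : AEMeasurable f μ) :
    ∫⁻ x, f x ∂μ ≤ (∫⁻ x, f x ^ 2 ∂μ) ^ (1 / 2 : ℝ) := by
  simpa using ENNReal.lintegral_mul_le_Lp_mul_Lq μ Real.HolderConjugate.two_two hf
    (aemeasurable_const (b := 1))

lemma lintegral_ofReal_sq_gaussianReal (v : ℝ≥0) :
    ∫⁻ x, ENNReal.ofReal (x ^ 2) ∂gaussianReal 0 v = v := by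
  have h := ofReal_variance (memLp_id_gaussianReal (μ := 0) (v := v) 2)
  rw [variance_id_gaussianReal, evariance_eq_lintegral_ofReal] at h
  simpa [integral_id_gaussianReal] using h.symm

lemma lintegral_ofReal_sum_sq_pi_gaussianReal (ι : Type*) [Fintype ι] :
    ∫⁻ y, ENNReal.ofReal (∑ i, y i ^ 2) ∂(Measure.pi fun _ : ι ↦ gaussianReal 0 1)
      = Fintype.card ι := by
  simp_rw [ENNReal.ofReal_sum_of_nonneg fun i _ ↦ sq_nonneg _]
  rw [lintegral_finsetSum _ fun i _ ↦ by fun_prop]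
  have h (i : ι) := (measurePreserving_eval (fun _ : ι ↦ gaussianReal 0 1) i).lintegral_comp
    (f := fun x ↦ ENNReal.ofReal (x ^ 2)) (by fun_prop)
  simp only [Function.eval] at h
  simp [h, lintegral_ofReal_sq_gaussianReal]

lemma lintegral_sqrt_sum_sq_pi_gaussianReal_le (ι : Type*) [Fintype ι] :
    ∫⁻ y, ENNReal.ofReal √(∑ i, y i ^ 2) ∂(Measure.pi fun _ : ι ↦ gaussianReal 0 1)
      ≤ ENNReal.ofReal √(Fintype.card ι) := by
  calc _ ≤ (∫⁻ y, ENNReal.ofReal √(∑ i, y i ^ 2) ^ 2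
          ∂(Measure.pi fun _ : ι ↦ gaussianReal 0 1)) ^ (1 / 2 : ℝ) :=
        lintegral_le_rpow_lintegral_sq (by fun_prop : Measurable _).aemeasurable
    _ = ENNReal.ofReal √(Fintype.card ι) := by
        have h (y : ι → ℝ) :
            ENNReal.ofReal √(∑ i, y i ^ 2) ^ 2 = ENNReal.ofReal (∑ i, y i ^ 2) := by
          rw [← ENNReal.ofReal_pow (sqrt_nonneg _), sq_sqrt (by positivity)]
        simp_rw [h, lintegral_ofReal_sum_sq_pi_gaussianReal, sqrt_eq_rpow]
        rw [← ENNReal.ofReal_rpow_of_nonneg (Nat.cast_nonneg _) (by norm_num),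
          ENNReal.ofReal_natCast]

lemma gaussianPDFReal_le (μ : ℝ) (v : ℝ≥0) (x : ℝ) :
    gaussianPDFReal μ v x ≤ (√(2 * π * v))⁻¹ := by
  rw [gaussianPDFReal]
  refine mul_le_of_le_one_right (by positivity) (exp_le_one_iff.2 ?_)
  exact div_nonpos_of_nonpos_of_nonneg (neg_nonpos.2 (sq_nonneg _)) (by positivity)

lemma gaussianReal_sq_lt_le (r : ℝ) :
    gaussianReal 0 1 {x | x ^ 2 < r} ≤ ENNReal.ofReal (2 * √r / √(2 * π)) := by
  calc gaussianReal 0 1 {x | x ^ 2 < r}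
      = ∫⁻ x in Ioo (-√r) √r, gaussianPDF 0 1 x := by
        rw [← gaussianReal_apply 0 one_ne_zero]; congr; ext; exact sq_lt
    _ ≤ ∫⁻ x in Ioo (-√r) √r, ENNReal.ofReal (√(2 * π))⁻¹ :=
        lintegral_mono fun x ↦ ENNReal.ofReal_le_ofReal (by simpa using gaussianPDFReal_le 0 1 x)
    _ = ENNReal.ofReal (2 * √r / √(2 * π)) := by
        rw [setLIntegral_const, volume_Ioo, ← ENNReal.ofReal_mul (by positivity)]
        ring_nf

lemma pi_gaussianReal_sq_lt_mul_sum_sq_le (n : ℕ) {c : ℝ} (hc : 0 ≤ c) :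
    Measure.pi (fun _ : Fin (n + 1) ↦ gaussianReal 0 1) {y | y 0 ^ 2 < c * ∑ i, Fin.tail y i ^ 2}
      ≤ ENNReal.ofReal (2 * √c / √(2 * π) * √n) := by
  set C : Set (ℝ × (Fin n → ℝ)) := {p | p.1 ^ 2 < c * ∑ i, p.2 i ^ 2}
  have hC : MeasurableSet C := measurableSet_lt (by fun_prop) (by fun_prop)
  have hsplit := measurePreserving_piFinSuccAbove (fun _ : Fin (n + 1) ↦ gaussianReal 0 1) 0
  rw [show {y | y 0 ^ 2 < c * ∑ i, Fin.tail y i ^ 2}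
      = MeasurableEquiv.piFinSuccAbove (fun _ ↦ ℝ) 0 ⁻¹' C from rfl,
    hsplit.measure_preimage hC.nullMeasurableSet, Measure.prod_apply_symm hC]
  calc ∫⁻ z, gaussianReal 0 1 {s | s ^ 2 < c * ∑ i, z i ^ 2} ∂Measure.pi _
      ≤ ∫⁻ z, ENNReal.ofReal (2 * √c / √(2 * π)) * ENNReal.ofReal √(∑ i, z i ^ 2)
          ∂Measure.pi fun _ : Fin n ↦ gaussianReal 0 1 := by
        refine lintegral_mono fun z ↦ (gaussianReal_sq_lt_le _).trans_eq ?_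
        rw [← ENNReal.ofReal_mul (by positivity), sqrt_mul hc]
        ring_nf
    _ = ENNReal.ofReal (2 * √c / √(2 * π)) * ∫⁻ z, ENNReal.ofReal √(∑ i, z i ^ 2)
          ∂Measure.pi fun _ : Fin n ↦ gaussianReal 0 1 := lintegral_const_mul _ (by fun_prop)
    _ ≤ ENNReal.ofReal (2 * √c / √(2 * π)) * ENNReal.ofReal √n := by
        grw [lintegral_sqrt_sum_sq_pi_gaussianReal_le, Fintype.card_fin]
    _ = ENNReal.ofReal (2 * √c / √(2 * π) * √n) := (ENNReal.ofReal_mul (by positivity)).symm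

section stdGaussian

variable {E : Type*} [NormedAddCommGroup E] [InnerProductSpace ℝ E] [FiniteDimensional ℝ E]
  [MeasurableSpace E] [BorelSpace E]

lemma stdGaussian_inner_sq_lt_eq_pi {n : ℕ}
    (hn : Module.finrank ℝ E = n + 1) {u : E} (hu : ‖u‖ = 1) (s : ℝ) :
    stdGaussian E {x | ⟪x, u⟫_ℝ ^ 2 < s * ‖x‖ ^ 2}
      = Measure.pi (fun _ : Fin (n + 1) ↦ gaussianReal 0 1) {y | y 0 ^ 2 < s * ∑ i, y i ^ 2} := by
  have hu' : Orthonormal ℝ (({0} : Set (Fin (n + 1))).domRestrict fun _ ↦ u) := by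
    exact ⟨fun _ ↦ hu, fun i j hij ↦ (hij (Subsingleton.elim i j)).elim⟩
  obtain ⟨b, hb⟩ := hu'.exists_orthonormalBasis_extension_of_card_eq (by simpa using hn)
  rw [stdGaussian_eq_map_pi_orthonormalBasis b,
    Measure.map_apply (by fun_prop) (measurableSet_lt (by fun_prop) (by fun_prop))]
  congr 1
  ext y
  have h1 : ∑ i, y i • b i = b.repr.symm (WithLp.toLp 2 y) := b.sum_repr_symm (WithLp.toLp 2 y)
  have h2 : ⟪b.repr.symm (WithLp.toLp 2 y), u⟫_ℝ = y 0 := by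
    rw [← hb 0 rfl, real_inner_comm, ← b.repr_apply_apply, LinearIsometryEquiv.apply_symm_apply]
  simp only [mem_preimage, mem_ofPred_eq, h1, h2, LinearIsometryEquiv.norm_map,
    EuclideanSpace.real_norm_sq_eq]

theorem stdGaussian_inner_sq_lt_mul_norm_sq_le {w : E} (hw : w ≠ 0) (a : ℝ) :
    stdGaussian E {x | ⟪x, w⟫_ℝ ^ 2 < a ^ 2 * ‖x‖ ^ 2}
      ≤ ENNReal.ofReal (2 * √(Module.finrank ℝ E) / √π * |a| / ‖w‖) := by
  obtain ⟨n, hn⟩ : ∃ n, Module.finrank ℝ E = n + 1 :=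
    Nat.exists_eq_add_one.2 (Module.finrank_pos_iff_exists_ne_zero.2 ⟨w, hw⟩)
  have hw0 : 0 < ‖w‖ := norm_pos_iff.2 hw
  set t := |a| / ‖w‖ with ht
  have ht0 : 0 ≤ t := by positivity
  rw [hn, mul_div_assoc, ← ht, Nat.cast_add_one]
  by_cases hbig : 1 ≤ 2 * √(n + 1) / √π * t
  · exact prob_le_one.trans (ENNReal.one_le_ofReal.2 hbig)
  have hsmall : (n + 1) * t ^ 2 < 1 := by
    have h : √(n + 1) * t < 1 := by
      have := sqrt_lt_sqrt pi_pos.le pi_lt_four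
      rw [show (4 : ℝ) = 2 ^ 2 by norm_num, sqrt_sq zero_le_two] at this
      rw [not_le, div_mul_eq_mul_div, div_lt_one (by positivity)] at hbig
      linarith
    calc (n + 1) * t ^ 2 = (√(n + 1) * t) ^ 2 := by rw [mul_pow, sq_sqrt (by positivity)]
      _ < 1 := pow_lt_one₀ (by positivity) h two_ne_zero
  have h1t : 0 < 1 - t ^ 2 := by nlinarith
  have hevent : {x : E | ⟪x, w⟫_ℝ ^ 2 < a ^ 2 * ‖x‖ ^ 2}
      = {x | ⟪x, ‖w‖⁻¹ • w⟫_ℝ ^ 2 < t ^ 2 * ‖x‖ ^ 2} := by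
    ext x
    simp only [mem_ofPred_eq, real_inner_smul_right, ht, div_pow, sq_abs, mul_pow, inv_pow]
    rw [inv_mul_eq_div, div_mul_eq_mul_div, div_lt_div_iff_of_pos_right (by positivity)]
  have hslab : {y : Fin (n + 1) → ℝ | y 0 ^ 2 < t ^ 2 * ∑ i, y i ^ 2}
      = {y | y 0 ^ 2 < t ^ 2 / (1 - t ^ 2) * ∑ i, Fin.tail y i ^ 2} := by
    ext y
    simp only [mem_ofPred_eq, Fin.sum_univ_succ, Fin.tail]
    rw [div_mul_eq_mul_div, lt_div_iff₀ h1t]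
    constructor <;> intro h <;> linarith
  rw [hevent, stdGaussian_inner_sq_lt_eq_pi hn (by simp [norm_smul, hw0.ne']), hslab]
  refine (pi_gaussianReal_sq_lt_mul_sum_sq_le n (by positivity)).trans
    (ENNReal.ofReal_le_ofReal ?_)
  calc 2 * √(t ^ 2 / (1 - t ^ 2)) / √(2 * π) * √n
      = 2 * t / √π * √(n / (2 * (1 - t ^ 2))) := by
        rw [sqrt_div (sq_nonneg t), sqrt_sq ht0, sqrt_mul zero_le_two, sqrt_div (Nat.cast_nonneg _),
          sqrt_mul zero_le_two]
        field_simp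
    _ ≤ 2 * t / √π * √(n + 1) := by
        gcongr
        rw [div_le_iff₀ (by positivity)]
        nlinarith
    _ = 2 * √(n + 1) / √π * t := by ring

end stdGaussian

theorem stmt_7_general {Ω : Type*} [MeasurableSpace Ω] (μ : Measure Ω)
    (d : ℕ) (X : Ω → Fin d → ℝ) (hX : Measurable X)
    (hlaw : Measure.map X μ = Measure.pi fun _ : Fin d => gaussianReal 0 1)
    (w : Fin d → ℝ) (hw : w ≠ 0) (a : ℝ) :
    μ {ω | (∑ i, X ω i * w i) ^ 2 < a ^ 2 * ∑ i, X ω i ^ 2}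
      ≤ ENNReal.ofReal ((2 * Real.sqrt d / Real.sqrt Real.pi) * |a|
          / Real.sqrt (∑ i, w i ^ 2)) := by
  have hA : MeasurableSet {x : Fin d → ℝ | (∑ i, x i * w i) ^ 2 < a ^ 2 * ∑ i, x i ^ 2} :=
    measurableSet_lt (by fun_prop) (by fun_prop)
  calc μ {ω | (∑ i, X ω i * w i) ^ 2 < a ^ 2 * ∑ i, X ω i ^ 2}
      = Measure.pi (fun _ : Fin d ↦ gaussianReal 0 1)
          {x | (∑ i, x i * w i) ^ 2 < a ^ 2 * ∑ i, x i ^ 2} := by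
        rw [← hlaw, Measure.map_apply hX hA]
        rfl
    _ = stdGaussian (EuclideanSpace ℝ (Fin d))
          {x | ⟪x, WithLp.toLp 2 w⟫_ℝ ^ 2 < a ^ 2 * ‖x‖ ^ 2} := by
        rw [← map_pi_eq_stdGaussian, Measure.map_apply (by fun_prop)
          (measurableSet_lt (by fun_prop) (by fun_prop))]
        congr 1
        ext x
        simp [EuclideanSpace.real_norm_sq_eq, PiLp.inner_apply, mul_comm]
    _ ≤ _ := by
        simpa [EuclideanSpace.norm_eq] using
          stdGaussian_inner_sq_lt_mul_norm_sq_le (E := EuclideanSpace ℝ (Fin d))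
            (w := WithLp.toLp 2 w) (by simpa using hw) a

/-- If `x` is a random vector in `ℝ^d` (`d ≥ 3`) with i.i.d. standard Gaussian coordinates,
then for every nonzero `w ∈ ℝ^d` and every real `a`,
`P[⟨x,w⟩² < a²·‖x‖²] ≤ (2√d/√π)·|a|/‖w‖`. -/
theorem stmt_7 {Ω : Type*} [MeasurableSpace Ω] (μ : Measure Ω) [IsProbabilityMeasure μ]
    (d : ℕ) (hd : 3 ≤ d) (X : Ω → Fin d → ℝ) (hX : Measurable X)
    (hlaw : Measure.map X μ = Measure.pi fun _ : Fin d => gaussianReal 0 1)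
    (w : Fin d → ℝ) (hw : w ≠ 0) (a : ℝ) :
    μ {ω | (∑ i, X ω i * w i) ^ 2 < a ^ 2 * ∑ i, X ω i ^ 2}
      ≤ ENNReal.ofReal ((2 * Real.sqrt d / Real.sqrt Real.pi) * |a|
          / Real.sqrt (∑ i, w i ^ 2)) :=
  stmt_7_general μ d X hX hlaw w hw a
end

section
/- Let d ≥ 1, let θ* ∈ ℝ^d be nonzero with s = ‖θ*‖, and let M denote the (d+1)×(d+1) real symmetric matrix with block form M = [[0_{d×d}, θ*],[θ*ᵀ, 0]], i.e., M_{ij} = 0 for i,j ≤ d, M_{i,d+1} = M_{d+1,i} = θ*_i for i ≤ d, and M_{d+1,d+1} = 0. Then for every c ∈ ℝ, every w ∈ ℝ^d and every a ∈ ℝ, the vector exp(c·M) applied to (w, a) ∈ ℝ^{d+1} equals ( w + (sinh(c·s)/s)·a·θ* + ((cosh(c·s) − 1)/s²)·⟨θ*, w⟩·θ* , cosh(c·s)·a + (sinh(c·s)/s)·⟨θ*, w⟩ ), where the first component lies in ℝ^d and the second in ℝ. -/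
/-!
If `A ^ 3 = s ^ 2 • A`, the exponential series of `c • A` collapses: odd powers are multiples of
`A` and even powers beyond the first are multiples of `A ^ 2`, and summing their coefficients gives
`exp (c • A) = 1 + (sinh (c s) / s) • A + ((cosh (c s) - 1) / s ^ 2) • A ^ 2`. The matrix
`M = [[0, θ*], [θ*ᵀ, 0]]` satisfies `M ^ 3 = ‖θ*‖ ^ 2 • M`, and `M` maps `(w, a)` to
`(a θ*, ⟪θ*, w⟫)`, so applying the collapsed series to `(w, a)` gives the formula.
-/

open scoped RealInnerProductSpace Nat

open Matrix

section PowThree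

variable {𝔸 : Type*} [Ring 𝔸] [Algebra ℝ 𝔸] {A : 𝔸} {s : ℝ}

theorem pow_two_mul_add_one_of_pow_three (h : A ^ 3 = s ^ 2 • A) (k : ℕ) :
    A ^ (2 * k + 1) = s ^ (2 * k) • A := by
  induction k with
  | zero => simp
  | succ k ih =>
    rw [mul_add, mul_one, add_right_comm, pow_add, ih, smul_mul_assoc, ← pow_succ', h, smul_smul,
      ← pow_add]

theorem pow_two_mul_add_two_of_pow_three (h : A ^ 3 = s ^ 2 • A) (k : ℕ) :
    A ^ (2 * k + 2) = s ^ (2 * k) • A ^ 2 := by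
  rw [pow_succ, pow_two_mul_add_one_of_pow_three h, smul_mul_assoc, ← sq]

variable [TopologicalSpace 𝔸] [IsTopologicalRing 𝔸] [ContinuousSMul ℝ 𝔸] [T2Space 𝔸]

theorem exp_smul_of_pow_three (h : A ^ 3 = s ^ 2 • A) (hs : s ≠ 0) (c : ℝ) :
    NormedSpace.exp (c • A) =
      1 + (Real.sinh (c * s) / s) • A + ((Real.cosh (c * s) - 1) / s ^ 2) • A ^ 2 := by
  have hodd : HasSum (fun k ↦ ((2 * k + 1)! : ℝ)⁻¹ • (c • A) ^ (2 * k + 1))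
      ((Real.sinh (c * s) / s) • A) := by
    refine (((Real.hasSum_sinh (c * s)).div_const s).smul_const A).congr_fun fun k ↦ ?_
    rw [smul_pow, pow_two_mul_add_one_of_pow_three h, smul_smul, smul_smul]
    congr 1
    field_simp
    ring
  have hcosh : HasSum (fun k ↦ (c * s) ^ (2 * (k + 1)) / (2 * (k + 1))!)
      (Real.cosh (c * s) - 1) := by
    simpa using (hasSum_nat_add_iff' 1).mpr (Real.hasSum_cosh (c * s))
  have heven_tail : HasSum (fun k ↦ ((2 * (k + 1))! : ℝ)⁻¹ • (c • A) ^ (2 * (k + 1)))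
      (((Real.cosh (c * s) - 1) / s ^ 2) • A ^ 2) := by
    refine ((hcosh.div_const (s ^ 2)).smul_const (A ^ 2)).congr_fun fun k ↦ ?_
    rw [mul_add, mul_one, smul_pow, pow_two_mul_add_two_of_pow_three h, smul_smul, smul_smul]
    congr 1
    field_simp
    ring
  have heven : HasSum (fun k ↦ ((2 * k)! : ℝ)⁻¹ • (c • A) ^ (2 * k))
      (1 + ((Real.cosh (c * s) - 1) / s ^ 2) • A ^ 2) := by
    simpa [add_comm] using (hasSum_nat_add_iff
      (f := fun k ↦ ((2 * k)! : ℝ)⁻¹ • (c • A) ^ (2 * k)) 1).mp heven_tail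
  rw [NormedSpace.exp_eq_tsum ℝ, add_right_comm]
  exact (HasSum.even_add_odd (f := fun n ↦ (n ! : ℝ)⁻¹ • (c • A) ^ n) heven hodd).tsum_eq

end PowThree

section BorderMatrix

variable {n R : Type*} [Fintype n] [CommRing R]

def borderMatrix (u : n → R) : Matrix (n ⊕ Unit) (n ⊕ Unit) R :=
  fromBlocks 0 (replicateCol Unit u) (replicateRow Unit u) 0

theorem borderMatrix_mulVec_sumElim (u w : n → R) (a : R) :
    borderMatrix u *ᵥ Sum.elim w (fun _ ↦ a) = Sum.elim (a • u) (fun _ ↦ u ⬝ᵥ w) := by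
  ext (i | i) <;> simp [borderMatrix, mulVec, dotProduct, mul_comm]

theorem borderMatrix_pow_three [DecidableEq n] (u : n → R) :
    borderMatrix u ^ 3 = (u ⬝ᵥ u) • borderMatrix u := by
  have hcol : replicateCol Unit u * (replicateRow Unit u * replicateCol Unit u) =
      (u ⬝ᵥ u) • replicateCol Unit u := by
    ext; simp [mul_apply, dotProduct, mul_comm]
  have hrow : replicateRow Unit u * (replicateCol Unit u * replicateRow Unit u) =
      (u ⬝ᵥ u) • replicateRow Unit u := by
    rw [← Matrix.mul_assoc]; ext; simp [mul_apply, dotProduct, mul_comm]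
  simp [borderMatrix, pow_three, fromBlocks_multiply, fromBlocks_smul, hcol, hrow]

end BorderMatrix

theorem stmt_14_general (d : ℕ) (θstar : EuclideanSpace ℝ (Fin d)) (hθ : θstar ≠ 0)
    (s : ℝ) (hs : s = ‖θstar‖)
    (M : Matrix (Fin d ⊕ Unit) (Fin d ⊕ Unit) ℝ)
    (hM : M = Matrix.fromBlocks 0 (Matrix.of fun i (_ : Unit) => θstar i)
      (Matrix.of fun (_ : Unit) j => θstar j) 0)
    (c : ℝ) (w : EuclideanSpace ℝ (Fin d)) (a : ℝ) :
    (NormedSpace.exp (c • M)).mulVec (Sum.elim (fun i => w i) (fun _ => a))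
      = Sum.elim
          (fun i => w i + (Real.sinh (c * s) / s) * a * θstar i
            + ((Real.cosh (c * s) - 1) / s ^ 2) * ⟪θstar, w⟫ * θstar i)
          (fun _ => Real.cosh (c * s) * a + (Real.sinh (c * s) / s) * ⟪θstar, w⟫) := by
  replace hM : M = borderMatrix θstar.ofLp := hM
  have hs0 : s ≠ 0 := hs ▸ norm_ne_zero_iff.mpr hθ
  have hθθ : θstar.ofLp ⬝ᵥ θstar.ofLp = s ^ 2 := by
    rw [hs, ← real_inner_self_eq_norm_sq, EuclideanSpace.inner_eq_star_dotProduct]; rfl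
  have hθw : θstar.ofLp ⬝ᵥ w.ofLp = ⟪θstar, w⟫ := by
    rw [EuclideanSpace.inner_eq_star_dotProduct, dotProduct_comm]; rfl
  rw [hM, exp_smul_of_pow_three (hθθ ▸ borderMatrix_pow_three θstar.ofLp) hs0 c,
    sq (borderMatrix _), add_mulVec, add_mulVec, one_mulVec, smul_mulVec, smul_mulVec,
    ← mulVec_mulVec, borderMatrix_mulVec_sumElim, borderMatrix_mulVec_sumElim]
  ext (i | _)
  · simp [hθw, mul_assoc]
  · simp only [hθw, hθθ, dotProduct_smul, smul_eq_mul, Pi.add_apply, Pi.smul_apply,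
      Sum.elim_inr]
    field_simp
    ring

/-- For nonzero `θ* ∈ ℝ^d` with `s = ‖θ*‖` and the `(d+1)×(d+1)` symmetric block matrix
`M = [[0, θ*],[θ*ᵀ, 0]]`, for every `c ∈ ℝ`, `w ∈ ℝ^d`, `a ∈ ℝ`, the vector `exp(c·M)`
applied to `(w, a)` equals
`(w + (sinh(c·s)/s)·a·θ* + ((cosh(c·s) − 1)/s²)·⟨θ*, w⟩·θ*,
  cosh(c·s)·a + (sinh(c·s)/s)·⟨θ*, w⟩)`. -/
theorem stmt_14 (d : ℕ) (hd : 1 ≤ d) (θstar : EuclideanSpace ℝ (Fin d)) (hθ : θstar ≠ 0)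
    (s : ℝ) (hs : s = ‖θstar‖)
    (M : Matrix (Fin d ⊕ Unit) (Fin d ⊕ Unit) ℝ)
    (hM : M = Matrix.fromBlocks 0 (Matrix.of fun i (_ : Unit) => θstar i)
      (Matrix.of fun (_ : Unit) j => θstar j) 0)
    (c : ℝ) (w : EuclideanSpace ℝ (Fin d)) (a : ℝ) :
    (NormedSpace.exp (c • M)).mulVec (Sum.elim (fun i => w i) (fun _ => a))
      = Sum.elim
          (fun i => w i + (Real.sinh (c * s) / s) * a * θstar i
            + ((Real.cosh (c * s) - 1) / s ^ 2) * ⟪θstar, w⟫ * θstar i)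
          (fun _ => Real.cosh (c * s) * a + (Real.sinh (c * s) / s) * ⟪θstar, w⟫) :=
  stmt_14_general d θstar hθ s hs M hM c w a
end

section
/- Let m, d ≥ 1, let η ≥ 0 be real, let θ* ∈ ℝ^d, and for each i ∈ [m] let w_i ∈ ℝ^d and a_i ∈ ℝ with |a_i| ≤ η^{1/4}. Set θ = Σ_{i=1}^m a_i·w_i and define updated weights w_i' = w_i − η·a_i·(θ − θ*). Then (1/m)·Σ_{i=1}^m ‖w_i'‖² ≤ (1/m)·Σ_{i=1}^m ‖w_i‖² − (2η/m − η^{5/2})·‖θ − θ*‖² − (2η/m)·⟨θ − θ*, θ*⟩. -/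
open scoped RealInnerProductSpace

/-- One population-gradient step on the first-layer weights: if `|a_i| ≤ η^{1/4}`,
`θ = Σ_i a_i·w_i` and `w_i' = w_i − η·a_i·(θ − θ*)`, then
`(1/m)·Σ_i ‖w_i'‖² ≤ (1/m)·Σ_i ‖w_i‖² − (2η/m − η^{5/2})·‖θ − θ*‖² − (2η/m)·⟨θ − θ*, θ*⟩`. -/
theorem stmt_15 (m d : ℕ) (hm : 1 ≤ m) (hd : 1 ≤ d) (η : ℝ) (hη : 0 ≤ η)
    (θstar : EuclideanSpace ℝ (Fin d))
    (w : Fin m → EuclideanSpace ℝ (Fin d)) (a : Fin m → ℝ)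
    (ha : ∀ i, |a i| ≤ η ^ ((1 : ℝ)/4))
    (θ : EuclideanSpace ℝ (Fin d)) (hθ : θ = ∑ i, a i • w i)
    (w' : Fin m → EuclideanSpace ℝ (Fin d))
    (hw' : ∀ i, w' i = w i - (η * a i) • (θ - θstar)) :
    (1 / m) * ∑ i, ‖w' i‖ ^ 2
      ≤ (1 / m) * ∑ i, ‖w i‖ ^ 2
        - (2 * η / m - η ^ ((5 : ℝ)/2)) * ‖θ - θstar‖ ^ 2
        - (2 * η / m) * ⟪θ - θstar, θstar⟫ := by
  have hm' : (0 : ℝ) < m := by positivity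
  set v := θ - θstar with hv
  -- expand each term
  have h1 : ∀ i, ‖w' i‖ ^ 2
      = ‖w i‖ ^ 2 - 2 * η * (a i * ⟪w i, v⟫) + η ^ 2 * (a i) ^ 2 * ‖v‖ ^ 2 := by
    intro i
    rw [hw' i, @norm_sub_sq_real, real_inner_smul_right, norm_smul]
    rw [Real.norm_eq_abs, mul_pow, sq_abs]
    ring
  have hsum : ∑ i, ‖w' i‖ ^ 2
      = ∑ i, ‖w i‖ ^ 2 - 2 * η * ⟪θ, v⟫ + η ^ 2 * (∑ i, (a i) ^ 2) * ‖v‖ ^ 2 := by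
    have hθv : ∑ i, (a i * ⟪w i, v⟫) = ⟪θ, v⟫ := by
      rw [hθ, sum_inner]
      exact Finset.sum_congr rfl fun i _ => (real_inner_smul_left (w i) v (a i)).symm
    calc ∑ i, ‖w' i‖ ^ 2
        = ∑ i, (‖w i‖ ^ 2 - 2 * η * (a i * ⟪w i, v⟫) + η ^ 2 * (a i) ^ 2 * ‖v‖ ^ 2) :=
          Finset.sum_congr rfl fun i _ => h1 i
      _ = ∑ i, ‖w i‖ ^ 2 - 2 * η * (∑ i, (a i * ⟪w i, v⟫))
            + η ^ 2 * (∑ i, (a i) ^ 2) * ‖v‖ ^ 2 := by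
          rw [Finset.sum_add_distrib, Finset.sum_sub_distrib, ← Finset.mul_sum,
            ← Finset.sum_mul, ← Finset.mul_sum]
      _ = _ := by rw [hθv]
  -- inner product decomposition
  have hinner : ⟪θ, v⟫ = ‖v‖ ^ 2 + ⟪v, θstar⟫ := by
    have : θ = v + θstar := by rw [hv]; abel
    rw [this, inner_add_left, real_inner_self_eq_norm_sq, real_inner_comm]
  -- bound on sum of squares
  have hasq : ∑ i, (a i) ^ 2 ≤ m * η ^ ((1 : ℝ)/2) := by
    have hb : ∀ i : Fin m, (a i) ^ 2 ≤ η ^ ((1 : ℝ)/2) := by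
      intro i
      have h2 : (a i) ^ 2 ≤ (η ^ ((1 : ℝ)/4)) ^ 2 := by
        rw [← sq_abs]
        exact pow_le_pow_left₀ (abs_nonneg _) (ha i) 2
      calc (a i) ^ 2 ≤ (η ^ ((1 : ℝ)/4)) ^ 2 := h2
        _ = η ^ ((1 : ℝ)/2) := by
            rw [← Real.rpow_natCast (η ^ ((1:ℝ)/4)) 2, ← Real.rpow_mul hη]
            norm_num
    calc ∑ i, (a i) ^ 2 ≤ ∑ _i : Fin m, η ^ ((1 : ℝ)/2) :=
          Finset.sum_le_sum fun i _ => hb i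
      _ = m * η ^ ((1 : ℝ)/2) := by simp [Finset.sum_const]
  -- rpow arithmetic: η^2 * η^(1/2) = η^(5/2)
  have hrpow : η ^ 2 * η ^ ((1 : ℝ)/2) = η ^ ((5 : ℝ)/2) := by
    rw [← Real.rpow_natCast η 2, ← Real.rpow_add' hη (by norm_num)]
    norm_num
  -- combine
  have hbound : η ^ 2 * (∑ i, (a i) ^ 2) * ‖v‖ ^ 2 ≤ m * η ^ ((5 : ℝ)/2) * ‖v‖ ^ 2 := by
    have : η ^ 2 * (∑ i, (a i) ^ 2) ≤ η ^ 2 * (m * η ^ ((1 : ℝ)/2)) :=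
      mul_le_mul_of_nonneg_left hasq (by positivity)
    have h2 : η ^ 2 * (m * η ^ ((1 : ℝ)/2)) = m * η ^ ((5 : ℝ)/2) := by
      rw [← hrpow]; ring
    nlinarith [sq_nonneg ‖v‖]
  rw [hsum, hinner]
  have hmm : (1 : ℝ) / m * (m * η ^ ((5 : ℝ)/2) * ‖v‖ ^ 2) = η ^ ((5:ℝ)/2) * ‖v‖^2 := by
    field_simp
  have := mul_le_mul_of_nonneg_left hbound (le_of_lt (by positivity : (0:ℝ) < 1/m))
  rw [hmm] at this
  have expand : (1 / m) * (∑ i, ‖w i‖ ^ 2 - 2 * η * (‖v‖ ^ 2 + ⟪v, θstar⟫)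
      + η ^ 2 * (∑ i, (a i) ^ 2) * ‖v‖ ^ 2)
      = (1 / m) * ∑ i, ‖w i‖ ^ 2 - (2 * η / m) * ‖v‖ ^ 2 - (2 * η / m) * ⟪v, θstar⟫
        + (1 / m) * (η ^ 2 * (∑ i, (a i) ^ 2) * ‖v‖ ^ 2) := by ring
  rw [expand]
  linarith
end

section
/- Let d ≥ 1, m ≥ 1, let η be real, let θ* ∈ ℝ^d with s = ‖θ*‖, and let a_i, γ_i ∈ ℝ for i ∈ [m]. Set w_i = γ_i·θ* (all neurons perfectly aligned with θ*), θ = Σ_{i=1}^m a_i·w_i, and r = Σ_{i=1}^m a_i·γ_i − 1, so that θ − θ* = r·θ*. Define the population gradient descent updates a_i' = a_i − η·⟨θ − θ*, w_i⟩ and w_i' = w_i − η·a_i·(θ − θ*), and set θ' = Σ_{i=1}^m a_i'·w_i'. Then each updated neuron remains aligned, namely w_i' = (γ_i − η·a_i·r)·θ*, and the updated residual satisfies θ' − θ* = ( r·(1 − η·(Σ_{i=1}^m a_i² + s²·Σ_{i=1}^m γ_i²)) + η²·r²·(r+1)·s² )·θ*. -/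
open scoped RealInnerProductSpace

/-- Perfectly aligned neurons stay aligned under one population gradient step, and the
end-to-end residual evolves as
`θ' − θ* = (r·(1 − η·(Σ a_i² + s²·Σ γ_i²)) + η²·r²·(r+1)·s²)·θ*`. -/
theorem stmt_16 (d m : ℕ) (hd : 1 ≤ d) (hm : 1 ≤ m) (η : ℝ)
    (θstar : EuclideanSpace ℝ (Fin d)) (s : ℝ) (hs : s = ‖θstar‖)
    (a γ : Fin m → ℝ)
    (w : Fin m → EuclideanSpace ℝ (Fin d)) (hw : ∀ i, w i = γ i • θstar)
    (θ : EuclideanSpace ℝ (Fin d)) (hθ : θ = ∑ i, a i • w i)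
    (r : ℝ) (hr : r = (∑ i, a i * γ i) - 1)
    (a' : Fin m → ℝ) (ha' : ∀ i, a' i = a i - η * ⟪θ - θstar, w i⟫)
    (w' : Fin m → EuclideanSpace ℝ (Fin d))
    (hw' : ∀ i, w' i = w i - (η * a i) • (θ - θstar))
    (θ' : EuclideanSpace ℝ (Fin d)) (hθ' : θ' = ∑ i, a' i • w' i) :
    (∀ i, w' i = (γ i - η * a i * r) • θstar) ∧
      θ' - θstar
        = (r * (1 - η * ((∑ i, (a i) ^ 2) + s ^ 2 * ∑ i, (γ i) ^ 2))
            + η ^ 2 * r ^ 2 * (r + 1) * s ^ 2) • θstar := by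
  have hres : θ - θstar = r • θstar := by
    rw [hθ, hr]
    simp only [hw, smul_smul]
    rw [← Finset.sum_smul, sub_smul, one_smul]
  have hw'2 : ∀ i, w' i = (γ i - η * a i * r) • θstar := by
    intro i
    rw [hw' i, hw i, hres, smul_smul, ← sub_smul]
  refine ⟨hw'2, ?_⟩
  have ha'2 : ∀ i, a' i = a i - η * (r * (γ i * s ^ 2)) := by
    intro i
    rw [ha' i, hres, hw i, real_inner_smul_left, real_inner_smul_right,
      real_inner_self_eq_norm_sq, hs]
  have hθ'2 : θ' = (∑ i, (a i - η * (r * (γ i * s ^ 2))) * (γ i - η * a i * r)) • θstar := by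
    rw [hθ', Finset.sum_smul]
    refine Finset.sum_congr rfl fun i _ => ?_
    rw [ha'2 i, hw'2 i, smul_smul]
  have hsum : (∑ i, a i * γ i) = r + 1 := by rw [hr]; ring
  have hterm : ∀ i : Fin m, (a i - η * (r * (γ i * s ^ 2))) * (γ i - η * a i * r)
      = (a i * γ i) - η * r * (a i) ^ 2 - η * r * s ^ 2 * (γ i) ^ 2
        + η ^ 2 * r ^ 2 * s ^ 2 * (a i * γ i) := fun i => by ring
  have hC : (∑ i, (a i - η * (r * (γ i * s ^ 2))) * (γ i - η * a i * r))
      = (r + 1) - η * r * (∑ i, (a i) ^ 2) - η * r * s ^ 2 * (∑ i, (γ i) ^ 2)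
        + η ^ 2 * r ^ 2 * s ^ 2 * (r + 1) := by
    rw [Finset.sum_congr rfl fun i _ => hterm i]
    rw [Finset.sum_add_distrib, Finset.sum_sub_distrib, Finset.sum_sub_distrib,
      ← Finset.mul_sum, ← Finset.mul_sum, ← Finset.mul_sum, hsum]
  rw [hθ'2, hC]
  module
end
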